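/- Let (Ω, μ) be a probability space carrying a measure-preserving measurable action φ of ℝ^d, let f ∈ L²(Ω, μ), and let ν be a spectral measure of f. Then for every R > 0, ∫_{C_R(0)} | ∫_Ω f(φ_t(ω)) · conj(f(ω)) dμ(ω) |² dt ≤ ‖f‖_{L²(μ)} · ∫_{ℝ^d} ( ∫_Ω |S_R(f, λ)(ω)|² dμ(ω) )^{1/2} dν(λ). -/

import Mathlib

/-!
Write `c(t) = ⟨f ∘ φ_t, f⟩ = ∫ e^{2πi⟨t,z⟩} dν(z)`. Expanding `conj c` through the spectral
measure and applying Fubini on `C_R(0) × ℝ^d` gives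
`∫_{C_R} |c|² = ∫ (∫_{C_R} e^{-2πi⟨z,t⟩} c(t) dt) dν(z)`.
A second Fubini, on `C_R(0) × Ω`, turns the inner integral into `⟨S_R(f, z), f⟩_{L²(μ)}`, which
Cauchy–Schwarz bounds by `‖f‖₂ ‖S_R(f, z)‖₂`. All the integrability and measurability this needs
comes from the fact that `(t, ω) ↦ φ_t ω` pushes `dt|_{C_R} ⊗ μ` forward to `|C_R| • μ`; in
particular `S_R(f, z) ∈ L²` with `‖S_R(f, z)‖₂ ≤ |C_R| ‖f‖₂`.
-/

open MeasureTheory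

noncomputable section

/-- The cube `C_R(0) = [-R, R]^d` in `ℝ^d`. -/
def cube (d : ℕ) (R : ℝ) : Set (EuclideanSpace ℝ (Fin d)) :=
  {t | ∀ i, |t i| ≤ R}

open Function ComplexConjugate

section CauchySchwarz

variable {α : Type*} [MeasurableSpace α] {μ : Measure α}

theorem norm_integral_mul_le_sqrt_mul_sqrt {u v : α → ℂ} (hu : MemLp u 2 μ) (hv : MemLp v 2 μ) :
    ‖∫ a, u a * v a ∂μ‖ ≤ √(∫ a, ‖u a‖ ^ 2 ∂μ) * √(∫ a, ‖v a‖ ^ 2 ∂μ) := by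
  calc ‖∫ a, u a * v a ∂μ‖ ≤ ∫ a, ‖u a‖ * ‖v a‖ ∂μ := by
        simpa only [norm_mul] using norm_integral_le_integral_norm (fun a => u a * v a)
    _ ≤ (∫ a, ‖u a‖ ^ (2 : ℝ) ∂μ) ^ (1 / 2 : ℝ) * (∫ a, ‖v a‖ ^ (2 : ℝ) ∂μ) ^ (1 / 2 : ℝ) :=
        integral_mul_le_Lp_mul_Lq_of_nonneg .two_two (ae_of_all _ fun _ => norm_nonneg _)
          (ae_of_all _ fun _ => norm_nonneg _) (by simpa using hu.norm) (by simpa using hv.norm)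
    _ = √(∫ a, ‖u a‖ ^ 2 ∂μ) * √(∫ a, ‖v a‖ ^ 2 ∂μ) := by
        simp only [Real.sqrt_eq_rpow, Real.rpow_two]

theorem sq_norm_integral_mul_le [IsFiniteMeasure μ] {k g : α → ℂ} (hk : AEStronglyMeasurable k μ)
    (hk1 : ∀ a, ‖k a‖ ≤ 1) (hg : MemLp g 2 μ) :
    ‖∫ a, k a * g a ∂μ‖ ^ 2 ≤ μ.real Set.univ * ∫ a, ‖g a‖ ^ 2 ∂μ := by
  have hk2 : MemLp k 2 μ :=
    (memLp_const (1 : ℂ)).of_le hk (ae_of_all _ fun a => by simpa using hk1 a)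
  have hk_int : ∫ a, ‖k a‖ ^ 2 ∂μ ≤ μ.real Set.univ := by
    simpa using integral_mono_of_nonneg (ae_of_all _ fun a => sq_nonneg ‖k a‖)
      (integrable_const (1 : ℝ)) (ae_of_all _ fun a => pow_le_one₀ (norm_nonneg _) (hk1 a))
  calc ‖∫ a, k a * g a ∂μ‖ ^ 2 ≤ (√(∫ a, ‖k a‖ ^ 2 ∂μ) * √(∫ a, ‖g a‖ ^ 2 ∂μ)) ^ 2 := by
        gcongr; exact norm_integral_mul_le_sqrt_mul_sqrt hk2 hg
    _ ≤ μ.real Set.univ * ∫ a, ‖g a‖ ^ 2 ∂μ := by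
        rw [mul_pow, Real.sq_sqrt (integral_nonneg fun _ => sq_nonneg _),
          Real.sq_sqrt (integral_nonneg fun _ => sq_nonneg _)]
        gcongr

end CauchySchwarz

section Flow

variable {T Ω : Type*} [MeasurableSpace T] [MeasurableSpace Ω] {ρ : Measure T} {μ : Measure Ω}
  {Φ : T → Ω → Ω}

theorem map_prod_uncurry_eq_smul [SFinite μ] (hΦ : Measurable (uncurry Φ))
    (hpres : ∀ t, MeasurePreserving (Φ t) μ μ) :
    (ρ.prod μ).map (uncurry Φ) = ρ Set.univ • μ := by
  ext s hs
  rw [Measure.map_apply hΦ hs, Measure.prod_apply (hΦ hs), Measure.smul_apply, smul_eq_mul]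
  change ∫⁻ t, μ (Φ t ⁻¹' s) ∂ρ = _
  simp_rw [(hpres _).measure_preimage hs.nullMeasurableSet, lintegral_const, mul_comm]

theorem quasiMeasurePreserving_uncurry [SFinite μ] (hΦ : Measurable (uncurry Φ))
    (hpres : ∀ t, MeasurePreserving (Φ t) μ μ) :
    Measure.QuasiMeasurePreserving (uncurry Φ) (ρ.prod μ) μ :=
  ⟨hΦ, by rw [map_prod_uncurry_eq_smul hΦ hpres]; exact Measure.smul_absolutelyContinuous⟩

theorem quasiMeasurePreserving_uncurry_swap [SFinite ρ] [SFinite μ] (hΦ : Measurable (uncurry Φ))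
    (hpres : ∀ t, MeasurePreserving (Φ t) μ μ) :
    Measure.QuasiMeasurePreserving (fun p : Ω × T => Φ p.2 p.1) (μ.prod ρ) μ :=
  (quasiMeasurePreserving_uncurry hΦ hpres).comp
    Measure.measurePreserving_swap.quasiMeasurePreserving

theorem integrable_comp_uncurry [IsFiniteMeasure ρ] [SFinite μ] (hΦ : Measurable (uncurry Φ))
    (hpres : ∀ t, MeasurePreserving (Φ t) μ μ) {E : Type*} [NormedAddCommGroup E] {g : Ω → E}
    (hg : Integrable g μ) : Integrable (g ∘ uncurry Φ) (ρ.prod μ) := by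
  rw [← integrable_map_measure _ hΦ.aemeasurable, map_prod_uncurry_eq_smul hΦ hpres]
  · exact hg.smul_measure (measure_ne_top _ _)
  · rw [map_prod_uncurry_eq_smul hΦ hpres]; exact hg.1.smul_measure _

theorem integral_comp_uncurry [SFinite μ] (hΦ : Measurable (uncurry Φ))
    (hpres : ∀ t, MeasurePreserving (Φ t) μ μ) {E : Type*} [NormedAddCommGroup E]
    [NormedSpace ℝ E] {g : Ω → E} (hg : AEStronglyMeasurable g μ) :
    ∫ p, g (uncurry Φ p) ∂(ρ.prod μ) = ρ.real Set.univ • ∫ ω, g ω ∂μ := by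
  rw [← integral_map hΦ.aemeasurable, map_prod_uncurry_eq_smul hΦ hpres, integral_smul_measure]
  · rfl
  · rw [map_prod_uncurry_eq_smul hΦ hpres]; exact hg.smul_measure _

/-- With `ρ` the Lebesgue measure on `C_R(0)` and `k t = e^{-2πi⟨λ,t⟩}` this is `S_R(f, λ)`. -/
def weightedErgodicIntegral (ρ : Measure T) (Φ : T → Ω → Ω) (k : T → ℂ) (f : Ω → ℂ)
    (ω : Ω) : ℂ :=
  ∫ t, k t * f (Φ t ω) ∂ρ

def correlation (μ : Measure Ω) (Φ : T → Ω → Ω) (f : Ω → ℂ) (t : T) : ℂ :=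
  ∫ ω, f (Φ t ω) * conj (f ω) ∂μ

theorem aestronglyMeasurable_weightedErgodicIntegral [SFinite ρ] [SFinite μ]
    (hΦ : Measurable (uncurry Φ)) (hpres : ∀ t, MeasurePreserving (Φ t) μ μ) {k : T → ℂ}
    (hk : AEStronglyMeasurable k ρ) {f : Ω → ℂ} (hf : AEStronglyMeasurable f μ) :
    AEStronglyMeasurable (weightedErgodicIntegral ρ Φ k f) μ :=
  (hk.comp_snd.mul (hf.comp_quasiMeasurePreserving
    (quasiMeasurePreserving_uncurry_swap hΦ hpres))).integral_prod_right'

theorem aestronglyMeasurable_weightedErgodicIntegral_prod {Λ : Type*} [MeasurableSpace Λ]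
    {ν : Measure Λ} [SFinite ν] [SFinite ρ] [SFinite μ]
    (hΦ : Measurable (uncurry Φ)) (hpres : ∀ t, MeasurePreserving (Φ t) μ μ) {K : Λ → T → ℂ}
    (hK : Measurable (uncurry K)) {f : Ω → ℂ} (hf : AEStronglyMeasurable f μ) :
    AEStronglyMeasurable (fun p : Λ × Ω => weightedErgodicIntegral ρ Φ (K p.1) f p.2)
      (ν.prod μ) := by
  have hF : AEStronglyMeasurable (fun q : (Λ × Ω) × T => f (Φ q.2 q.1.2)) ((ν.prod μ).prod ρ) :=
    hf.comp_quasiMeasurePreserving ((quasiMeasurePreserving_uncurry hΦ hpres).comp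
      (Measure.measurePreserving_swap.quasiMeasurePreserving.comp
        (Measure.quasiMeasurePreserving_snd.comp
          (measurePreserving_prodAssoc ν μ ρ).quasiMeasurePreserving)))
  have hK' : AEStronglyMeasurable (fun q : (Λ × Ω) × T => K q.1.1 q.2) ((ν.prod μ).prod ρ) :=
    (hK.comp (measurable_fst.fst.prodMk measurable_snd)).aestronglyMeasurable
  exact (hK'.mul hF).integral_prod_right'

theorem ae_sq_norm_weightedErgodicIntegral_le [IsFiniteMeasure ρ] [SFinite μ]
    (hΦ : Measurable (uncurry Φ)) (hpres : ∀ t, MeasurePreserving (Φ t) μ μ) {k : T → ℂ}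
    (hk : AEStronglyMeasurable k ρ) (hk1 : ∀ t, ‖k t‖ ≤ 1) {f : Ω → ℂ} (hf : MemLp f 2 μ) :
    ∀ᵐ ω ∂μ, ‖weightedErgodicIntegral ρ Φ k f ω‖ ^ 2
      ≤ ρ.real Set.univ * ∫ t, ‖f (Φ t ω)‖ ^ 2 ∂ρ := by
  have hF : AEStronglyMeasurable (fun p : Ω × T => f (Φ p.2 p.1)) (μ.prod ρ) :=
    hf.1.comp_quasiMeasurePreserving (quasiMeasurePreserving_uncurry_swap hΦ hpres)
  have hF2 : Integrable (fun p : Ω × T => ‖f (Φ p.2 p.1)‖ ^ 2) (μ.prod ρ) :=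
    (integrable_comp_uncurry hΦ hpres ((memLp_two_iff_integrable_sq_norm hf.1).1 hf)).swap
  filter_upwards [hF.prodMk_left, hF2.prod_right_ae] with ω hmeas hint
  exact sq_norm_integral_mul_le hk hk1 ((memLp_two_iff_integrable_sq_norm hmeas).2 hint)

theorem integrable_integral_sq_norm_comp [IsFiniteMeasure ρ] [SFinite μ]
    (hΦ : Measurable (uncurry Φ)) (hpres : ∀ t, MeasurePreserving (Φ t) μ μ) {f : Ω → ℂ}
    (hf : MemLp f 2 μ) : Integrable (fun ω => ∫ t, ‖f (Φ t ω)‖ ^ 2 ∂ρ) μ :=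
  (integrable_comp_uncurry (ρ := ρ) hΦ hpres ((memLp_two_iff_integrable_sq_norm hf.1).1 hf)).swap
    |>.integral_prod_left

theorem memLp_weightedErgodicIntegral [IsFiniteMeasure ρ] [SFinite μ]
    (hΦ : Measurable (uncurry Φ)) (hpres : ∀ t, MeasurePreserving (Φ t) μ μ) {k : T → ℂ}
    (hk : AEStronglyMeasurable k ρ) (hk1 : ∀ t, ‖k t‖ ≤ 1) {f : Ω → ℂ} (hf : MemLp f 2 μ) :
    MemLp (weightedErgodicIntegral ρ Φ k f) 2 μ := by
  have hS := aestronglyMeasurable_weightedErgodicIntegral hΦ hpres hk hf.1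
  refine (memLp_two_iff_integrable_sq_norm hS).2 <|
    ((integrable_integral_sq_norm_comp (ρ := ρ) hΦ hpres hf).const_mul (ρ.real Set.univ)).mono'
      (hS.norm.pow 2) ?_
  filter_upwards [ae_sq_norm_weightedErgodicIntegral_le hΦ hpres hk hk1 hf] with ω hω
  rwa [Real.norm_of_nonneg (sq_nonneg _)]

theorem integral_sq_norm_weightedErgodicIntegral_le [IsFiniteMeasure ρ] [SFinite μ]
    (hΦ : Measurable (uncurry Φ)) (hpres : ∀ t, MeasurePreserving (Φ t) μ μ) {k : T → ℂ}
    (hk : AEStronglyMeasurable k ρ) (hk1 : ∀ t, ‖k t‖ ≤ 1) {f : Ω → ℂ} (hf : MemLp f 2 μ) :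
    ∫ ω, ‖weightedErgodicIntegral ρ Φ k f ω‖ ^ 2 ∂μ
      ≤ ρ.real Set.univ ^ 2 * ∫ ω, ‖f ω‖ ^ 2 ∂μ := by
  have hS := memLp_weightedErgodicIntegral hΦ hpres hk hk1 hf
  have hF2 : Integrable (fun p : T × Ω => ‖f (Φ p.1 p.2)‖ ^ 2) (ρ.prod μ) :=
    integrable_comp_uncurry hΦ hpres ((memLp_two_iff_integrable_sq_norm hf.1).1 hf)
  calc ∫ ω, ‖weightedErgodicIntegral ρ Φ k f ω‖ ^ 2 ∂μ
      ≤ ∫ ω, ρ.real Set.univ * ∫ t, ‖f (Φ t ω)‖ ^ 2 ∂ρ ∂μ :=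
        integral_mono_ae ((memLp_two_iff_integrable_sq_norm hS.1).1 hS)
          ((integrable_integral_sq_norm_comp hΦ hpres hf).const_mul _)
          (ae_sq_norm_weightedErgodicIntegral_le hΦ hpres hk hk1 hf)
    _ = ρ.real Set.univ * ∫ p, ‖f (uncurry Φ p)‖ ^ 2 ∂(ρ.prod μ) := by
        rw [integral_const_mul, integral_integral_swap (by exact hF2.swap), ← integral_prod _ hF2]
        rfl
    _ = ρ.real Set.univ ^ 2 * ∫ ω, ‖f ω‖ ^ 2 ∂μ := by
        rw [integral_comp_uncurry hΦ hpres (g := fun ω => ‖f ω‖ ^ 2) (hf.1.norm.pow 2),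
          smul_eq_mul]
        ring

theorem integral_mul_correlation_eq [IsFiniteMeasure ρ] [SFinite μ]
    (hΦ : Measurable (uncurry Φ)) (hpres : ∀ t, MeasurePreserving (Φ t) μ μ) {k : T → ℂ}
    (hk : AEStronglyMeasurable k ρ) (hk1 : ∀ t, ‖k t‖ ≤ 1) {f : Ω → ℂ} (hf : MemLp f 2 μ) :
    ∫ t, k t * correlation μ Φ f t ∂ρ
      = ∫ ω, weightedErgodicIntegral ρ Φ k f ω * conj (f ω) ∂μ := by
  have hf2 := (memLp_two_iff_integrable_sq_norm hf.1).1 hf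
  have hint : Integrable (uncurry fun t ω => k t * (f (Φ t ω) * conj (f ω))) (ρ.prod μ) := by
    refine ((integrable_comp_uncurry hΦ hpres hf2).add (hf2.comp_snd ρ)).mono'
      (hk.comp_fst.mul ((hf.1.comp_quasiMeasurePreserving
        (quasiMeasurePreserving_uncurry hΦ hpres)).mul hf.1.comp_snd.star)) (ae_of_all _ ?_)
    -- `‖k t‖ ‖a‖ ‖b‖ ≤ ‖a‖² + ‖b‖²`
    rintro ⟨t, ω⟩
    have := hk1 t
    simp only [uncurry_apply_pair, norm_mul, Complex.norm_conj, Pi.add_apply, comp_apply]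
    nlinarith [norm_nonneg (k t), norm_nonneg (f (Φ t ω)), norm_nonneg (f ω),
      sq_nonneg (‖f (Φ t ω)‖ - ‖f ω‖)]
  unfold correlation weightedErgodicIntegral
  simp_rw [← integral_const_mul, ← integral_mul_const, mul_assoc]
  exact integral_integral_swap hint

theorem norm_integral_mul_correlation_le [IsFiniteMeasure ρ] [SFinite μ]
    (hΦ : Measurable (uncurry Φ)) (hpres : ∀ t, MeasurePreserving (Φ t) μ μ) {k : T → ℂ}
    (hk : AEStronglyMeasurable k ρ) (hk1 : ∀ t, ‖k t‖ ≤ 1) {f : Ω → ℂ} (hf : MemLp f 2 μ) :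
    ‖∫ t, k t * correlation μ Φ f t ∂ρ‖
      ≤ √(∫ ω, ‖f ω‖ ^ 2 ∂μ) * √(∫ ω, ‖weightedErgodicIntegral ρ Φ k f ω‖ ^ 2 ∂μ) := by
  rw [integral_mul_correlation_eq hΦ hpres hk hk1 hf, mul_comm]
  simpa only [Pi.star_apply, Complex.star_def, Complex.norm_conj] using
    norm_integral_mul_le_sqrt_mul_sqrt (memLp_weightedErgodicIntegral hΦ hpres hk hk1 hf) hf.star

theorem integrable_sqrt_integral_sq_norm_weightedErgodicIntegral {Λ : Type*} [MeasurableSpace Λ]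
    {ν : Measure Λ} [IsFiniteMeasure ν] [IsFiniteMeasure ρ] [SFinite μ]
    (hΦ : Measurable (uncurry Φ)) (hpres : ∀ t, MeasurePreserving (Φ t) μ μ) {K : Λ → T → ℂ}
    (hK : Measurable (uncurry K)) (hK1 : ∀ z t, ‖K z t‖ ≤ 1) {f : Ω → ℂ} (hf : MemLp f 2 μ) :
    Integrable (fun z => √(∫ ω, ‖weightedErgodicIntegral ρ Φ (K z) f ω‖ ^ 2 ∂μ)) ν := by
  refine .of_bound (Real.continuous_sqrt.comp_aestronglyMeasurable
    ((aestronglyMeasurable_weightedErgodicIntegral_prod hΦ hpres hK hf.1).norm.pow 2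
      |>.integral_prod_right')) √(ρ.real Set.univ ^ 2 * ∫ ω, ‖f ω‖ ^ 2 ∂μ)
    (ae_of_all _ fun z => ?_)
  rw [Real.norm_of_nonneg (Real.sqrt_nonneg _)]
  exact Real.sqrt_le_sqrt (integral_sq_norm_weightedErgodicIntegral_le hΦ hpres
    (hK.comp measurable_prodMk_left).aestronglyMeasurable (hK1 z) hf)

end Flow

theorem ofReal_integral_sq_norm_integral_eq {T Λ : Type*} [MeasurableSpace T] [MeasurableSpace Λ]
    {ρ : Measure T} {ν : Measure Λ} [IsFiniteMeasure ρ] [IsFiniteMeasure ν] {χ : T → Λ → ℂ}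
    (hχ : Measurable (uncurry χ)) (hχ1 : ∀ t z, ‖χ t z‖ ≤ 1) :
    ((∫ t, ‖∫ z, χ t z ∂ν‖ ^ 2 ∂ρ : ℝ) : ℂ) = ∫ z, ∫ t, conj (χ t z) * ∫ z', χ t z' ∂ν ∂ρ ∂ν := by
  have hc : StronglyMeasurable fun t => ∫ z, χ t z ∂ν :=
    hχ.stronglyMeasurable.integral_prod_right'
  have hint : Integrable (uncurry fun t z => conj (χ t z) * ∫ z', χ t z' ∂ν) (ρ.prod ν) := by
    refine .of_bound ((hχ.stronglyMeasurable.star.mul hc.comp_fst).aestronglyMeasurable)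
      (ν.real Set.univ) (ae_of_all _ fun p => ?_)
    have hc1 : ‖∫ z, χ p.1 z ∂ν‖ ≤ ν.real Set.univ := by
      simpa using norm_integral_le_of_norm_le_const (μ := ν) (ae_of_all _ (hχ1 p.1))
    rw [uncurry_apply_pair, norm_mul, Complex.norm_conj]
    exact (mul_le_of_le_one_left (norm_nonneg _) (hχ1 p.1 p.2)).trans hc1
  calc ((∫ t, ‖∫ z, χ t z ∂ν‖ ^ 2 ∂ρ : ℝ) : ℂ)
      = ∫ t, conj (∫ z, χ t z ∂ν) * ∫ z, χ t z ∂ν ∂ρ := by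
        rw [← integral_complex_ofReal]
        congr 1 with t
        rw [mul_comm, Complex.mul_conj, Complex.normSq_eq_norm_sq, Complex.ofReal_pow]
    _ = ∫ t, ∫ z, conj (χ t z) * ∫ z', χ t z' ∂ν ∂ν ∂ρ := by
        simp_rw [← integral_conj, integral_mul_const]
    _ = ∫ z, ∫ t, conj (χ t z) * ∫ z', χ t z' ∂ν ∂ρ ∂ν := integral_integral_swap hint

theorem isCompact_cube (d : ℕ) (R : ℝ) : IsCompact (cube d R) := by
  have : cube d R = (EuclideanSpace.equiv (Fin d) ℝ) ⁻¹' Set.univ.pi fun _ => Set.Icc (-R) R := by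
    ext t
    simp only [cube, abs_le, Set.mem_preimage, Set.mem_univ_pi, Set.mem_Icc]
    rfl
  rw [this]
  exact (EuclideanSpace.equiv (Fin d) ℝ).toHomeomorph.isCompact_preimage.2
    (isCompact_univ_pi fun _ => isCompact_Icc)

theorem correlation_square_integral_le_spectral_average_general
    {d : ℕ}
    {Ω : Type} [MeasurableSpace Ω] (μ : Measure Ω) [IsProbabilityMeasure μ]
    (φ : EuclideanSpace ℝ (Fin d) → Ω → Ω)
    (hφmeas : Measurable fun p : EuclideanSpace ℝ (Fin d) × Ω => φ p.1 p.2)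
    (hφpres : ∀ t, MeasurePreserving (φ t) μ μ)
    (f : Ω → ℂ) (hf : MemLp f 2 μ)
    (ν : Measure (EuclideanSpace ℝ (Fin d))) [IsFiniteMeasure ν]
    (hspec : ∀ t : EuclideanSpace ℝ (Fin d),
      ∫ ω, f (φ t ω) * (starRingEnd ℂ) (f ω) ∂μ
        = ∫ z, Complex.exp (2 * Real.pi * Complex.I * ((∑ i, t i * z i : ℝ) : ℂ)) ∂ν)
    (R : ℝ) :
    (∫ t in cube d R, ‖∫ ω, f (φ t ω) * (starRingEnd ℂ) (f ω) ∂μ‖ ^ 2)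
      ≤ Real.sqrt (∫ ω, ‖f ω‖ ^ 2 ∂μ) *
        ∫ lam, Real.sqrt (∫ ω, ‖∫ t in cube d R,
            Complex.exp (-(2 * Real.pi * Complex.I) * ((∑ i, lam i * t i : ℝ) : ℂ))
              * f (φ t ω)‖ ^ 2 ∂μ) ∂ν := by
  set ρ := volume.restrict (cube d R)
  have : IsFiniteMeasure ρ := isFiniteMeasure_restrict.2 (isCompact_cube d R).measure_lt_top.ne
  set χ : EuclideanSpace ℝ (Fin d) → EuclideanSpace ℝ (Fin d) → ℂ :=
    fun t z => Complex.exp (2 * Real.pi * Complex.I * ((∑ i, t i * z i : ℝ) : ℂ))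
  set e : EuclideanSpace ℝ (Fin d) → EuclideanSpace ℝ (Fin d) → ℂ :=
    fun lam t => Complex.exp (-(2 * Real.pi * Complex.I) * ((∑ i, lam i * t i : ℝ) : ℂ))
  have hχ : Measurable (uncurry χ) := by fun_prop
  have he : Measurable (uncurry e) := by fun_prop
  have hχ1 : ∀ t z, ‖χ t z‖ ≤ 1 := fun t z => by simp [χ, Complex.norm_exp]
  have he1 : ∀ lam t, ‖e lam t‖ ≤ 1 := fun lam t => by simp [e, Complex.norm_exp]
  have hconj : ∀ t z, conj (χ t z) = e z t := fun t z => by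
    simp only [χ, e, ← Complex.exp_conj, map_mul, Complex.conj_ofReal, Complex.conj_I, map_ofNat]
    simp_rw [mul_comm (t _) (z _)]
    ring_nf
  have hcorr : ∀ t, ∫ z, χ t z ∂ν = correlation μ φ f t := fun t => (hspec t).symm
  calc (∫ t, ‖∫ ω, f (φ t ω) * (starRingEnd ℂ) (f ω) ∂μ‖ ^ 2 ∂ρ)
      = ‖((∫ t, ‖∫ z, χ t z ∂ν‖ ^ 2 ∂ρ : ℝ) : ℂ)‖ := by
        simp_rw [hspec]
        rw [Complex.norm_real, Real.norm_of_nonneg (integral_nonneg fun _ => sq_nonneg _)]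
    _ = ‖∫ z, ∫ t, e z t * correlation μ φ f t ∂ρ ∂ν‖ := by
        rw [ofReal_integral_sq_norm_integral_eq hχ hχ1]
        simp_rw [hconj, hcorr]
    _ ≤ ∫ z, √(∫ ω, ‖f ω‖ ^ 2 ∂μ) * √(∫ ω, ‖weightedErgodicIntegral ρ φ (e z) f ω‖ ^ 2 ∂μ) ∂ν :=
        norm_integral_le_of_norm_le
          ((integrable_sqrt_integral_sq_norm_weightedErgodicIntegral hφmeas hφpres he he1
            hf).const_mul _)
          (ae_of_all _ fun z => norm_integral_mul_correlation_le hφmeas hφpres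
            (he.comp measurable_prodMk_left).aestronglyMeasurable (he1 z) hf)
    _ = _ := integral_const_mul _ _

/-- The square integral over the cube of the correlations `⟨f ∘ φ_t, f⟩` is bounded by
`‖f‖_{L²}` times the spectral-measure average of the `L²` norms of the twisted ergodic
integrals over all spectral parameters `λ`. -/
theorem correlation_square_integral_le_spectral_average
    {d : ℕ} (hd : 1 ≤ d)
    {Ω : Type} [MeasurableSpace Ω] (μ : Measure Ω) [IsProbabilityMeasure μ]
    (φ : EuclideanSpace ℝ (Fin d) → Ω → Ω)
    (hφ0 : φ 0 = id)
    (hφadd : ∀ s t, φ (s + t) = φ s ∘ φ t)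
    (hφmeas : Measurable fun p : EuclideanSpace ℝ (Fin d) × Ω => φ p.1 p.2)
    (hφpres : ∀ t, MeasurePreserving (φ t) μ μ)
    (f : Ω → ℂ) (hf : MemLp f 2 μ)
    (ν : Measure (EuclideanSpace ℝ (Fin d))) [IsFiniteMeasure ν]
    (hspec : ∀ t : EuclideanSpace ℝ (Fin d),
      ∫ ω, f (φ t ω) * (starRingEnd ℂ) (f ω) ∂μ
        = ∫ z, Complex.exp (2 * Real.pi * Complex.I * ((∑ i, t i * z i : ℝ) : ℂ)) ∂ν)
    (R : ℝ) (hR : 0 < R) :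
    (∫ t in cube d R, ‖∫ ω, f (φ t ω) * (starRingEnd ℂ) (f ω) ∂μ‖ ^ 2)
      ≤ Real.sqrt (∫ ω, ‖f ω‖ ^ 2 ∂μ) *
        ∫ lam, Real.sqrt (∫ ω, ‖∫ t in cube d R,
            Complex.exp (-(2 * Real.pi * Complex.I) * ((∑ i, lam i * t i : ℝ) : ℂ))
              * f (φ t ω)‖ ^ 2 ∂μ) ∂ν :=
  correlation_square_integral_le_spectral_average_general μ φ hφmeas hφpres f hf ν hspec R

end
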